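/- In weighted least squares regression of y on regressors (1, T, X, T·X) with positive weights, the coefficient on T equals the difference between the intercept of the weighted least squares fit of y on (1, X) using only observations with T = 1 and the intercept of the weighted least squares fit of y on (1, X) using only observations with T = 0. -/
import Mathlib


/-- In weighted least squares regression of `y` on regressors `(1, T, X, T·X)`
with positive weights `w` and binary treatment `T`, the coefficient on `T`
equals the difference between the intercept of the WLS fit of `y` on `(1, X)`
on the `T = 1` subsample and the intercept of the WLS fit of `y` on `(1, X)`
on the `T = 0` subsample.  Full rank of the subsample design matrices is
encoded via uniqueness of the (strict) minimizers. -/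
theorem rd_regression_difference_of_intercepts
    (n : ℕ) (y X w T : Fin n → ℝ)
    (hT : ∀ i, T i = 0 ∨ T i = 1) (hw : ∀ i, 0 < w i)
    -- joint WLS objective on regressors (1, T, X, T·X)
    (Q : (Fin 4 → ℝ) → ℝ)
    (hQ : ∀ b, Q b = ∑ i, w i *
      (y i - (b 0 + b 1 * T i + b 2 * X i + b 3 * (T i * X i))) ^ 2)
    -- one-sided WLS objectives on regressors (1, X)
    (Qp Qm : ℝ → ℝ → ℝ)
    (hQp : ∀ a c, Qp a c = ∑ i, T i * w i * (y i - (a + c * X i)) ^ 2)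
    (hQm : ∀ a c, Qm a c = ∑ i, (1 - T i) * w i * (y i - (a + c * X i)) ^ 2)
    -- unique minimizers
    (β : Fin 4 → ℝ) (hβ : ∀ b, b ≠ β → Q β < Q b)
    (ap cp : ℝ) (hp : ∀ a c, (a, c) ≠ (ap, cp) → Qp ap cp < Qp a c)
    (am cm : ℝ) (hm : ∀ a c, (a, c) ≠ (am, cm) → Qm am cm < Qm a c) :
    β 1 = ap - am := by
  have decomp : ∀ b : Fin 4 → ℝ,
      Q b = Qp (b 0 + b 1) (b 2 + b 3) + Qm (b 0) (b 2) := by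
    intro b
    rw [hQ, hQp, hQm, ← Finset.sum_add_distrib]
    refine Finset.sum_congr rfl fun i _ => ?_
    rcases hT i with h | h <;> rw [h] <;> ring
  have hple : ∀ a c, Qp ap cp ≤ Qp a c := by
    intro a c
    by_cases h : (a, c) = (ap, cp)
    · rw [Prod.mk.injEq] at h; rw [h.1, h.2]
    · exact le_of_lt (hp a c h)
  have hmle : ∀ a c, Qm am cm ≤ Qm a c := by
    intro a c
    by_cases h : (a, c) = (am, cm)
    · rw [Prod.mk.injEq] at h; rw [h.1, h.2]
    · exact le_of_lt (hm a c h)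
  set b' : Fin 4 → ℝ := ![am, ap - am, cm, cp - cm] with hb'
  have hQb' : Q b' = Qp ap cp + Qm am cm := by
    rw [decomp]
    have h0 : b' 0 = am := rfl
    have h1 : b' 1 = ap - am := rfl
    have h2 : b' 2 = cm := rfl
    have h3 : b' 3 = cp - cm := rfl
    rw [h0, h1, h2, h3]
    ring_nf
  have hbb : b' = β := by
    by_contra h
    have h1 := hβ b' h
    have h2 : Q b' ≤ Q β := by
      rw [hQb', decomp β]
      exact add_le_add (hple _ _) (hmle _ _)
    exact absurd h1 (not_lt.mpr h2)
  rw [← hbb]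
  rfl
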